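/- Let p₁, …, p_H be p-values of H independent hypothesis tests such that under each true null hypothesis the p-value is uniformly distributed on [0,1] (more generally, super-uniform: P(p_i ≤ t) ≤ t). The Benjamini–Hochberg procedure at level α, which rejects the nulls with the k smallest p-values where k = max{ i : p_(i) ≤ iα/H } (p_(i) being the order statistics), controls the false discovery rate: E[V / max(R,1)] ≤ (H₀/H)·α ≤ α, where V is the number of true nulls rejected, R the total number of rejections, and H₀ the number of true nulls. -/

import Mathlib

open MeasureTheory ProbabilityTheory
open scoped NNReal ENNReal

noncomputable def Phi : ℝ → ℝ := fun x => ProbabilityTheory.cdf (gaussianReal 0 1) x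
noncomputable def PhiInv : ℝ → ℝ := Function.invFun Phi

noncomputable def gaussianE (d : ℕ) (x : EuclideanSpace ℝ (Fin d)) (σ : ℝ) :
    Measure (EuclideanSpace ℝ (Fin d)) :=
  (Measure.pi fun i => gaussianReal (x i) (⟨σ ^ 2, sq_nonneg σ⟩ : ℝ≥0)).map
    (MeasurableEquiv.toLp 2 (Fin d → ℝ))

open scoped Classical

/-- The Benjamini–Hochberg threshold index: the largest k ≤ H such that at least k
of the p-values are ≤ kα/H. (This step-up formulation is equivalent to taking
k = max{ i : p_(i) ≤ iα/H } with p_(i) the order statistics.) -/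
noncomputable def bhIndex (H : ℕ) (α : ℝ) (pv : Fin H → ℝ) : ℕ :=
  sSup {k : ℕ | k ≤ H ∧
    k ≤ (Finset.univ.filter (fun i : Fin H => pv i ≤ (k : ℝ) * α / H)).card}

/-- The BH procedure rejects hypothesis i iff its p-value is below (bhIndex)·α/H. -/
noncomputable def bhRejected (H : ℕ) (α : ℝ) (pv : Fin H → ℝ) : Finset (Fin H) :=
  Finset.univ.filter (fun i : Fin H => pv i ≤ (bhIndex H α pv : ℝ) * α / H)


/-! Let `R` be the number of BH rejections and, for a true null `i`, let `Rᵢ` be the number of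
rejections once `pᵢ` is replaced by `0`. If `pᵢ ≤ kα/H`, the step-up condition at every level
`≥ k` cannot tell `pᵢ` from `0`, so `R = k ↔ Rᵢ = k`; hence the share of `i` in the false
discovery proportion is `𝟙{pᵢ ≤ Rᵢα/H} / Rᵢ`. As `Rᵢ` depends only on the other p-values it is
independent of `pᵢ`, and super-uniformity gives
`E[𝟙{pᵢ ≤ Rᵢα/H} / Rᵢ] = ∑ₖ P(pᵢ ≤ kα/H) P(Rᵢ = k) / k ≤ (α/H) ∑ₖ P(Rᵢ = k) ≤ α/H`.
Summing over the `H₀` true nulls gives `FDR ≤ H₀α/H`. -/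

open Finset Function

theorem Nat.sSup_eq_of_inter_Ici_eq {S T : Set ℕ} {k : ℕ} (h : S ∩ Set.Ici k = T ∩ Set.Ici k)
    (hS : sSup S = k) : sSup T = k := by
  rcases Nat.eq_zero_or_pos k with rfl | hk
  · simp_all
  have hSne : S.Nonempty := by
    rw [Set.nonempty_iff_ne_empty]
    rintro rfl
    rw [csSup_empty, Nat.bot_eq_zero] at hS
    omega
  have hSbdd : BddAbove S := by
    by_contra hnb
    rw [Nat.sSup_of_not_bddAbove hnb] at hS
    omega
  have hkT : k ∈ T := (h.subset ⟨hS ▸ Nat.sSup_mem hSne hSbdd, Set.self_mem_Ici⟩).1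
  refine IsGreatest.csSup_eq ⟨hkT, fun m hm => ?_⟩
  by_contra! hkm
  have hmS : m ∈ S := (h.symm.subset ⟨hm, hkm.le⟩).1
  exact hkm.not_ge (hS ▸ le_csSup hSbdd hmS)

theorem Nat.sSup_eq_iff_of_inter_Ici_eq {S T : Set ℕ} {k : ℕ}
    (h : S ∩ Set.Ici k = T ∩ Set.Ici k) : sSup S = k ↔ sSup T = k :=
  ⟨Nat.sSup_eq_of_inter_Ici_eq h, Nat.sSup_eq_of_inter_Ici_eq h.symm⟩

theorem Nat.measurable_sSup {X : Type*} [MeasurableSpace X] {S : X → Set ℕ}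
    (hS : ∀ n, Measurable fun x => n ∈ S x) (hne : ∀ x, (S x).Nonempty)
    (hbdd : ∀ x, BddAbove (S x)) : Measurable fun x => sSup (S x) := by
  refine measurable_to_countable' fun k => ?_
  have hpre : (fun x => sSup (S x)) ⁻¹' {k} = {x | k ∈ S x ∧ ∀ m, m ∈ S x → m ≤ k} := by
    ext x
    refine ⟨fun hx => ?_, fun hx => (IsGreatest.csSup_eq hx : sSup (S x) = k)⟩
    rw [Set.mem_preimage, Set.mem_singleton_iff] at hx
    exact hx ▸ ⟨Nat.sSup_mem (hne x) (hbdd x), fun m hm => le_csSup (hbdd x) hm⟩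
  rw [hpre]
  exact ((hS k).and (Measurable.forall fun m => (hS m).imp measurable_const)).setOf

theorem Finset.card_inter_div_max_one_eq_sum {α : Type*} [DecidableEq α] (s t : Finset α) :
    (#(s ∩ t) : ℝ) / max (#t : ℝ) 1 = ∑ i ∈ s, if i ∈ t then (#t : ℝ)⁻¹ else 0 := by
  rw [← sum_filter, sum_const, nsmul_eq_mul, filter_mem_eq_inter]
  rcases t.eq_empty_or_nonempty with rfl | ht
  · simp
  · rw [max_eq_left (by exact_mod_cast ht.card_pos), div_eq_mul_inv]

theorem ProbabilityTheory.iIndepFun.indepFun_comp_update {Ω ι β γ : Type*}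
    [MeasurableSpace Ω] {μ : Measure Ω} [Fintype ι] [DecidableEq ι]
    [MeasurableSpace β] [MeasurableSpace γ] {p : ι → Ω → β} (hind : iIndepFun p μ)
    (hmeas : ∀ i, Measurable (p i)) (i : ι) (c : β) {g : (ι → β) → γ} (hg : Measurable g) :
    IndepFun (p i) (fun ω => g (update (fun j => p j ω) i c)) μ := by
  have hrest := hind.indepFun_finset {i} {i}ᶜ disjoint_compl_right hmeas
  have hfill : Measurable fun v : ({i}ᶜ : Finset ι) → β => g (updateFinset (fun _ => c) _ v) :=
    hg.comp measurable_updateFinset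
  convert hrest.comp (measurable_pi_apply ⟨i, mem_singleton_self i⟩) hfill using 1
  · rfl
  funext ω
  simp only [comp_apply]
  congr 1
  funext j
  rcases eq_or_ne j i with rfl | hj
  · simp [updateFinset]
  · simp [updateFinset, hj]

theorem ite_le_mul_inv_eq_sum_indicator {Ω : Type*} {X : Ω → ℝ} {N : Ω → ℕ} {n : ℕ} {c : ℝ}
    (hNle : ∀ ω, N ω ≤ n) (ω : Ω) :
    (if X ω ≤ N ω * c then (N ω : ℝ)⁻¹ else 0) =
      ∑ k ∈ range (n + 1),
        (X ⁻¹' Set.Iic (k * c) ∩ N ⁻¹' {k}).indicator (fun _ => (k : ℝ)⁻¹) ω := by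
  rw [sum_eq_single_of_mem (N ω) (mem_range_succ_iff.2 (hNle ω))]
  · simp [Set.indicator_apply]
  · intro k _ hk
    exact Set.indicator_of_notMem (fun hω => hk hω.2.symm) _

section Integral

variable {Ω : Type*} [MeasurableSpace Ω] {μ : Measure Ω} {X : Ω → ℝ} {N : Ω → ℕ} {n : ℕ}
  {c : ℝ}

theorem integrable_ite_le_mul_inv [IsFiniteMeasure μ] (hX : Measurable X) (hN : Measurable N)
    (hNle : ∀ ω, N ω ≤ n) :
    Integrable (fun ω => if X ω ≤ N ω * c then (N ω : ℝ)⁻¹ else 0) μ := by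
  simp_rw [ite_le_mul_inv_eq_sum_indicator hNle]
  exact integrable_finsetSum _ fun k _ =>
    (integrable_const _).indicator ((hX measurableSet_Iic).inter (hN (measurableSet_singleton k)))

theorem ProbabilityTheory.IndepFun.integral_ite_le_mul_inv_le [IsProbabilityMeasure μ]
    (hXN : IndepFun X N μ) (hX : Measurable X) (hN : Measurable N) (hNle : ∀ ω, N ω ≤ n)
    (hc : 0 ≤ c) (hsuper : ∀ k ∈ Icc 1 n, μ.real (X ⁻¹' Set.Iic (k * c)) ≤ k * c) :
    ∫ ω, (if X ω ≤ N ω * c then (N ω : ℝ)⁻¹ else 0) ∂μ ≤ c := by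
  have hterm : ∀ k ∈ range (n + 1),
      μ.real (X ⁻¹' Set.Iic (k * c) ∩ N ⁻¹' {k}) • (k : ℝ)⁻¹ ≤ c * μ.real (N ⁻¹' {k}) := by
    intro k hk
    rw [measureReal_def, hXN.measure_inter_preimage_eq_mul _ _ measurableSet_Iic
      (measurableSet_singleton k), ENNReal.toReal_mul, ← measureReal_def, ← measureReal_def,
      smul_eq_mul]
    rcases Nat.eq_zero_or_pos k with rfl | hk0
    · simp only [Nat.cast_zero, inv_zero, mul_zero]
      positivity
    have hkX := hsuper k (mem_Icc.2 ⟨hk0, mem_range_succ_iff.1 hk⟩)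
    calc μ.real (X ⁻¹' Set.Iic (k * c)) * μ.real (N ⁻¹' {k}) * (k : ℝ)⁻¹
        ≤ k * c * μ.real (N ⁻¹' {k}) * (k : ℝ)⁻¹ := by gcongr
      _ = c * μ.real (N ⁻¹' {k}) := by field_simp
  simp_rw [ite_le_mul_inv_eq_sum_indicator hNle]
  rw [integral_finsetSum _ fun k _ => (integrable_const _).indicator
    ((hX measurableSet_Iic).inter (hN (measurableSet_singleton k)))]
  simp_rw [integral_indicator_const _
    ((hX measurableSet_Iic).inter (hN (measurableSet_singleton _)))]
  calc ∑ k ∈ range (n + 1), μ.real (X ⁻¹' Set.Iic (k * c) ∩ N ⁻¹' {k}) • (k : ℝ)⁻¹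
      ≤ ∑ k ∈ range (n + 1), c * μ.real (N ⁻¹' {k}) := sum_le_sum hterm
    _ = c * μ.real (N ⁻¹' ↑(range (n + 1))) := by
      rw [← mul_sum, sum_measureReal_preimage_singleton _ fun k _ => hN (measurableSet_singleton k)]
    _ ≤ c := mul_le_of_le_one_right hc measureReal_le_one

theorem measureReal_le_mul_div_of_superUniform
    (hX : ∀ t ∈ Set.Icc (0:ℝ) 1, μ {ω | X ω ≤ t} ≤ ENNReal.ofReal t) {α : ℝ} (hα0 : 0 ≤ α)
    (hα1 : α ≤ 1) {k : ℕ} (hk : k ∈ Icc 1 n) :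
    μ.real (X ⁻¹' Set.Iic (k * (α / n))) ≤ k * (α / n) := by
  obtain ⟨hk1, hkn⟩ := mem_Icc.1 hk
  have hn : (n : ℝ) ≠ 0 := by exact_mod_cast (show n ≠ 0 by omega)
  have ht1 : (k : ℝ) * (α / n) ≤ 1 :=
    calc (k : ℝ) * (α / n) ≤ n * (α / n) := by gcongr
      _ = α := by field_simp
      _ ≤ 1 := hα1
  exact ENNReal.toReal_le_of_le_ofReal (by positivity) (hX _ ⟨by positivity, ht1⟩)

end Integral

/-- `bhIndex H α pv` is, by definition, `sSup (bhCandidates H α pv)`. -/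
def bhCandidates (H : ℕ) (α : ℝ) (pv : Fin H → ℝ) : Set ℕ :=
  {k | k ≤ H ∧ k ≤ #{i | pv i ≤ (k : ℝ) * α / H}}

section BHIndex

variable {H : ℕ} {α : ℝ}

theorem bddAbove_bhCandidates (pv : Fin H → ℝ) : BddAbove (bhCandidates H α pv) :=
  ⟨H, fun _ hk => hk.1⟩

theorem bhIndex_mem_bhCandidates (pv : Fin H → ℝ) : bhIndex H α pv ∈ bhCandidates H α pv :=
  Nat.sSup_mem ⟨0, by simp [bhCandidates]⟩ (bddAbove_bhCandidates pv)

theorem bhIndex_le (pv : Fin H → ℝ) : bhIndex H α pv ≤ H :=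
  (bhIndex_mem_bhCandidates pv).1

theorem le_bhIndex {pv : Fin H → ℝ} {k : ℕ} (hk : k ∈ bhCandidates H α pv) :
    k ≤ bhIndex H α pv :=
  le_csSup (bddAbove_bhCandidates pv) hk

theorem card_bhRejected (hα : 0 ≤ α) (pv : Fin H → ℝ) :
    #(bhRejected H α pv) = bhIndex H α pv := by
  obtain ⟨-, hle⟩ := bhIndex_mem_bhCandidates (α := α) pv
  refine le_antisymm (le_bhIndex ⟨(card_filter_le _ _).trans (card_fin H).le, ?_⟩) hle
  refine card_le_card fun i hi => ?_
  rw [bhRejected, mem_filter] at hi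
  exact mem_filter.2 ⟨mem_univ i, hi.2.trans (by gcongr; exact hle)⟩

theorem bhCandidates_update_zero_inter_Ici (hα : 0 ≤ α) {pv : Fin H → ℝ} {i : Fin H} {k : ℕ}
    (hpi : pv i ≤ k * α / H) :
    bhCandidates H α (update pv i 0) ∩ Set.Ici k = bhCandidates H α pv ∩ Set.Ici k := by
  ext m
  simp only [bhCandidates, Set.mem_inter_iff, Set.mem_ofPred_eq, Set.mem_Ici]
  refine and_congr_left fun hkm => ?_
  have hthr : k * α / H ≤ m * α / H := by gcongr
  have hsame : univ.filter (fun j => update pv i 0 j ≤ m * α / H) =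
      univ.filter (fun j => pv j ≤ m * α / H) := by
    ext j
    simp only [mem_filter, mem_univ, true_and]
    rcases eq_or_ne j i with rfl | hj
    · rw [update_self]
      exact iff_of_true (by positivity) (hpi.trans hthr)
    · rw [update_of_ne hj]
  rw [hsame]

theorem bhIndex_update_zero_eq_iff (hα : 0 ≤ α) {pv : Fin H → ℝ} {i : Fin H} {k : ℕ}
    (hpi : pv i ≤ k * α / H) : bhIndex H α (update pv i 0) = k ↔ bhIndex H α pv = k :=
  Nat.sSup_eq_iff_of_inter_Ici_eq (bhCandidates_update_zero_inter_Ici hα hpi)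

theorem measurable_bhIndex : Measurable (bhIndex H α) := by
  refine Nat.measurable_sSup (S := bhCandidates H α) (fun k => ?_)
    (fun _ => ⟨0, by simp [bhCandidates]⟩) bddAbove_bhCandidates
  have hcount : Measurable fun pv : Fin H → ℝ => #{i | pv i ≤ (k : ℝ) * α / H} := by
    simp_rw [card_filter]
    exact Finset.measurable_sum _ fun i _ =>
      Measurable.ite (measurableSet_le (measurable_pi_apply i) measurable_const)
        measurable_const measurable_const
  exact measurable_const.and (measurableSet_setOfPred.1 (hcount measurableSet_Ici))

end BHIndex

/-- When no hypothesis is rejected, both sides vanish through `(0 : ℝ)⁻¹ = 0`. -/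
theorem ite_mem_bhRejected_eq_update_zero {H : ℕ} {α : ℝ} (hα : 0 ≤ α) (pv : Fin H → ℝ)
    (i : Fin H) :
    (if i ∈ bhRejected H α pv then (#(bhRejected H α pv) : ℝ)⁻¹ else 0) =
      if pv i ≤ bhIndex H α (update pv i 0) * (α / H)
      then (bhIndex H α (update pv i 0) : ℝ)⁻¹ else 0 := by
  have hmem : i ∈ bhRejected H α pv ↔ pv i ≤ bhIndex H α pv * α / H := by simp [bhRejected]
  rw [card_bhRejected hα, ← mul_div_assoc]
  by_cases hpi : pv i ≤ bhIndex H α (update pv i 0) * α / H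
  · have heq := (bhIndex_update_zero_eq_iff hα hpi).1 rfl
    rw [if_pos hpi, if_pos (hmem.2 (heq ▸ hpi)), heq]
  · rw [if_neg hpi, if_neg fun hrej => hpi ?_]
    rwa [(bhIndex_update_zero_eq_iff hα (hmem.1 hrej)).2 rfl, ← hmem]

theorem benjamini_hochberg_fdr_control_general
    {Ω : Type*} [MeasurableSpace Ω] (μ : Measure Ω) [IsProbabilityMeasure μ]
    (H : ℕ) (α : ℝ) (hα : α ∈ Set.Ioo (0:ℝ) 1)
    (p : Fin H → Ω → ℝ) (hmeas : ∀ i, Measurable (p i))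
    (hind : ProbabilityTheory.iIndepFun p μ)
    (nulls : Finset (Fin H))
    (hsuper : ∀ i ∈ nulls, ∀ t ∈ Set.Icc (0:ℝ) 1,
      μ {ω | p i ω ≤ t} ≤ ENNReal.ofReal t) :
    (∫ ω, (((nulls ∩ bhRejected H α (fun i => p i ω)).card : ℝ) /
        max ((bhRejected H α (fun i => p i ω)).card : ℝ) 1) ∂μ)
      ≤ (nulls.card : ℝ) / H * α ∧ (nulls.card : ℝ) / H * α ≤ α := by
  obtain ⟨hα0, hα1⟩ := hα
  set R : Fin H → Ω → ℕ := fun i ω => bhIndex H α (update (fun j => p j ω) i 0)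
  have hR : ∀ i, Measurable (R i) := fun i => measurable_bhIndex.comp (by fun_prop)
  refine ⟨?_, ?_⟩
  · simp_rw [card_inter_div_max_one_eq_sum, ite_mem_bhRejected_eq_update_zero hα0.le]
    rw [integral_finsetSum _ fun i _ =>
      integrable_ite_le_mul_inv (hmeas i) (hR i) fun _ => bhIndex_le _]
    calc ∑ i ∈ nulls, ∫ ω, (if p i ω ≤ R i ω * (α / H) then (R i ω : ℝ)⁻¹ else 0) ∂μ
        ≤ ∑ _i ∈ nulls, α / H := sum_le_sum fun i hi =>
          (hind.indepFun_comp_update hmeas i 0 measurable_bhIndex).integral_ite_le_mul_inv_le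
            (hmeas i) (hR i) (fun _ => bhIndex_le _) (by positivity)
            fun _ => measureReal_le_mul_div_of_superUniform (hsuper i hi) hα0.le hα1.le
      _ = nulls.card / H * α := by rw [sum_const, nsmul_eq_mul]; ring
  · refine mul_le_of_le_one_left hα0.le (div_le_one_of_le₀ ?_ (by positivity))
    exact_mod_cast (card_le_univ nulls).trans (card_fin H).le

/-- FDR control of the Benjamini–Hochberg procedure for independent, super-uniform
p-values: E[V / max(R,1)] ≤ (H₀/H)·α ≤ α, where V is the number of rejected true
nulls and R the total number of rejections. -/
theorem benjamini_hochberg_fdr_control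
    {Ω : Type*} [MeasurableSpace Ω] (μ : Measure Ω) [IsProbabilityMeasure μ]
    (H : ℕ) (hH : 0 < H) (α : ℝ) (hα : α ∈ Set.Ioo (0:ℝ) 1)
    (p : Fin H → Ω → ℝ) (hmeas : ∀ i, Measurable (p i))
    (hind : ProbabilityTheory.iIndepFun p μ)
    (nulls : Finset (Fin H))
    (hrange : ∀ i ω, p i ω ∈ Set.Icc (0:ℝ) 1)
    (hsuper : ∀ i ∈ nulls, ∀ t ∈ Set.Icc (0:ℝ) 1,
      μ {ω | p i ω ≤ t} ≤ ENNReal.ofReal t) :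
    (∫ ω, (((nulls ∩ bhRejected H α (fun i => p i ω)).card : ℝ) /
        max ((bhRejected H α (fun i => p i ω)).card : ℝ) 1) ∂μ)
      ≤ (nulls.card : ℝ) / H * α ∧ (nulls.card : ℝ) / H * α ≤ α :=
  benjamini_hochberg_fdr_control_general μ H α hα p hmeas hind nulls hsuper
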